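/- arXiv:2302.00036 — 2 statements merged into one kernel-verified Lean document; each statement's English description precedes it below -/
import Mathlib

section
/- In any finite MDP there exists at least one Blackwell-optimal policy: there exist a policy π and γ₀ ∈ [0,1) such that for every γ ∈ [γ₀, 1), every policy π' and every state s ∈ S, one has v^π_{γ,s} ≥ v^{π'}_{γ,s}. -/
open Matrix

/-- The transition matrix induced by a policy `π`. -/
def policyMatrix {S A : Type*} [Fintype S] (P : S → A → S → ℝ) (π : S → A) :
    Matrix S S ℝ :=
  Matrix.of fun s s' => P s (π s) s'

/-- The reward vector induced by a policy `π`. -/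
def policyReward {S A : Type*} (r : S → A → ℝ) (π : S → A) : S → ℝ :=
  fun s => r s (π s)

/-- The discounted value function of a policy `π`: `v^π_γ = (I - γ P_π)⁻¹ r_π`. -/
noncomputable def valueFn {S A : Type*} [Fintype S] [DecidableEq S]
    (r : S → A → ℝ) (P : S → A → S → ℝ) (π : S → A) (γ : ℝ) : S → ℝ :=
  ((1 : Matrix S S ℝ) - γ • policyMatrix P π)⁻¹ *ᵥ policyReward r π

/-!
By Cramer's rule, `det (I - γ P_π) • v^π_γ` is a polynomial in `γ`, and the determinant does not
vanish on `[0, 1)`. Hence for two policies `π, π'` and a state `s`, the sign of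
`v^π_γ(s) - v^{π'}_γ(s)` is the sign of a polynomial in `γ`, which is constant on some interval
`(c, 1)` because a nonzero polynomial has finitely many roots. There are finitely many such
comparisons, so all of them are frozen on some `[γ₀, 1)`; a policy that is `γ₀`-discounted optimal
(which exists by policy improvement) therefore stays optimal on all of `[γ₀, 1)`.
-/

open Polynomial Filter Topology Set

theorem Filter.eventually_iff_eventually_of_or {α : Type*} {l : Filter α} [l.NeBot]
    {p : α → Prop} (h : (∀ᶠ x in l, p x) ∨ ∀ᶠ x in l, ¬p x) :
    ∀ᶠ x in l, p x ↔ ∀ᶠ y in l, p y := by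
  rcases h with h | h
  · exact h.mono fun x hx => iff_of_true hx h
  · exact h.mono fun x hx => iff_of_false hx fun h' => (h'.and h).exists.elim fun _ hy => hy.2 hy.1

namespace Polynomial

theorem eventually_eval_ne_zero_nhdsLT {q : ℝ[X]} (hq : q ≠ 0) (a : ℝ) :
    ∀ᶠ x in 𝓝[<] a, q.eval x ≠ 0 :=
  (nhdsLT_le_nhdsNE a).trans (nhdsNE_le_cofinite a) (finite_setOfPred_isRoot hq).compl_mem_cofinite

theorem eventually_nonneg_or_eventually_neg_nhdsLT (q : ℝ[X]) (a : ℝ) :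
    (∀ᶠ x in 𝓝[<] a, 0 ≤ q.eval x) ∨ ∀ᶠ x in 𝓝[<] a, q.eval x < 0 := by
  rcases eq_or_ne q 0 with rfl | hq
  · simp
  obtain ⟨l, hla : l < a, hroots⟩ :=
    mem_nhdsLT_iff_exists_Ioo_subset.1 (eventually_eval_ne_zero_nhdsLT hq a)
  have hsign : ∀ x ∈ Ioo l a, ∀ y ∈ Ioo l a, 0 ≤ q.eval x → 0 ≤ q.eval y := by
    intro x hx y hy hqx
    by_contra! hqy
    obtain ⟨z, hz, hqz⟩ :=
      isPreconnected_Ioo.intermediate_value hy hx q.continuousOn ⟨hqy.le, hqx⟩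
    exact hroots hz hqz
  obtain ⟨m, hm⟩ := nonempty_Ioo.2 hla
  have hIoo : Ioo l a ∈ 𝓝[<] a := Ioo_mem_nhdsLT hla
  rcases le_or_gt 0 (q.eval m) with hqm | hqm
  · exact .inl <| eventually_of_mem hIoo fun x hx => hsign m hm x hx hqm
  · exact .inr <| eventually_of_mem hIoo fun x hx =>
      not_le.1 fun hqx => hqm.not_ge (hsign x hx m hm hqx)

end Polynomial

namespace Matrix

variable {n K : Type*} [Fintype n] [DecidableEq n]

section Stochastic

variable [Field K] [LinearOrder K] [IsStrictOrderedRing K] {M : Matrix n n K} {γ : K}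

theorem nonneg_of_one_sub_smul_mulVec_nonneg (hM : M ∈ rowStochastic K n) (hγ0 : 0 ≤ γ)
    (hγ1 : γ < 1) {y : n → K} (h : 0 ≤ (1 - γ • M) *ᵥ y) : 0 ≤ y := by
  intro i
  obtain ⟨i₀, -, hmin⟩ := Finset.univ.exists_min_image y ⟨i, Finset.mem_univ i⟩
  -- minimum principle: a row of `M` averages `y`, so `(M *ᵥ y) i₀ ≥ y i₀`
  have hmean : y i₀ ≤ (M *ᵥ y) i₀ := by
    have := nonneg_mulVec_of_mem_rowStochastic hM (x := y - y i₀ • 1)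
      (fun j => by simpa using hmin j (Finset.mem_univ j)) i₀
    simpa [mulVec_sub, mulVec_smul, hM.2] using this
  have hi₀ : 0 ≤ y i₀ - γ * (M *ᵥ y) i₀ := by simpa [sub_mulVec, smul_mulVec] using h i₀
  have : 0 ≤ (1 - γ) * y i₀ := by linarith [mul_le_mul_of_nonneg_left hmean hγ0]
  exact (nonneg_of_mul_nonneg_right this (sub_pos.2 hγ1)).trans (hmin i (Finset.mem_univ i))

theorem det_one_sub_smul_ne_zero (hM : M ∈ rowStochastic K n) (hγ0 : 0 ≤ γ) (hγ1 : γ < 1) :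
    (1 - γ • M).det ≠ 0 := by
  intro hdet
  obtain ⟨v, hv0, hv⟩ := exists_mulVec_eq_zero_iff.2 hdet
  have hpos := nonneg_of_one_sub_smul_mulVec_nonneg hM hγ0 hγ1 hv.ge
  have hneg := nonneg_of_one_sub_smul_mulVec_nonneg hM hγ0 hγ1 (y := -v)
    (by rw [mulVec_neg, hv, neg_zero])
  exact hv0 (le_antisymm (neg_nonneg.1 hneg) hpos)

end Stochastic

section Resolvent

variable [Field K] (M : Matrix n n K) (γ : K)

theorem mapMatrix_evalRingHom_one_sub_X_smul :
    (evalRingHom γ).mapMatrix (1 - (X : K[X]) • M.map C) = 1 - γ • M := by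
  ext i j
  by_cases h : i = j <;> simp [h, mul_comm γ]

theorem eval_charpolyRev_eq_det : M.charpolyRev.eval γ = (1 - γ • M).det := by
  rw [charpolyRev, ← coe_evalRingHom, RingHom.map_det, mapMatrix_evalRingHom_one_sub_X_smul]

theorem exists_polynomial_eval_eq_charpolyRev_mul_inv_mulVec (c : n → K) :
    ∃ p : n → K[X], ∀ γ : K, (1 - γ • M).det ≠ 0 →
      ∀ i, (p i).eval γ = M.charpolyRev.eval γ * ((1 - γ • M)⁻¹ *ᵥ c) i := by
  refine ⟨(1 - (X : K[X]) • M.map C).adjugate *ᵥ (C ∘ c), fun γ hdet i => ?_⟩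
  rw [← coe_evalRingHom, RingHom.map_mulVec, ← RingHom.mapMatrix_apply, RingHom.map_adjugate,
    mapMatrix_evalRingHom_one_sub_X_smul, coe_evalRingHom, eval_charpolyRev_eq_det, inv_def,
    smul_mulVec, Pi.smul_apply, smul_eq_mul, Ring.inverse_eq_inv, mul_inv_cancel_left₀ hdet]
  simp [Function.comp_def]

end Resolvent

end Matrix

section MDP

variable {S A : Type*} [Fintype S]

def qValue (r : S → A → ℝ) (P : S → A → S → ℝ) (γ : ℝ) (u : S → ℝ) (s : S) (a : A) : ℝ :=
  r s a + γ * (P s a ⬝ᵥ u)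

variable (r : S → A → ℝ) {P : S → A → S → ℝ} (hP : ∀ s a, P s a ∈ stdSimplex ℝ S)
include hP

theorem qValue_mono {γ : ℝ} (hγ0 : 0 ≤ γ) {u w : S → ℝ} (huw : u ≤ w) (s : S) (a : A) :
    qValue r P γ u s a ≤ qValue r P γ w s a :=
  add_le_add_right (mul_le_mul_of_nonneg_left
    (dotProduct_le_dotProduct_of_nonneg_left huw (hP s a).1) hγ0) _

variable [DecidableEq S]

theorem policyMatrix_mem_rowStochastic (π : S → A) : policyMatrix P π ∈ rowStochastic ℝ S :=
  mem_rowStochastic_iff_sum.2 ⟨fun s => (hP s (π s)).1, fun s => (hP s (π s)).2⟩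

section FixedDiscount

variable {γ : ℝ} (hγ0 : 0 ≤ γ) (hγ1 : γ < 1)
include hγ0 hγ1

theorem one_sub_smul_mulVec_valueFn_sub (π : S → A) (u : S → ℝ) :
    (1 - γ • policyMatrix P π) *ᵥ (valueFn r P π γ - u) =
      fun s => qValue r P γ u s (π s) - u s := by
  have hdet := det_one_sub_smul_ne_zero (policyMatrix_mem_rowStochastic hP π) hγ0 hγ1
  rw [mulVec_sub, valueFn, mulVec_mulVec, mul_nonsing_inv _ (isUnit_iff_ne_zero.2 hdet),
    one_mulVec]
  ext s
  simp only [Pi.sub_apply, sub_mulVec, one_mulVec, smul_mulVec, Pi.smul_apply, smul_eq_mul]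
  rw [qValue, policyReward]
  change _ = r s (π s) + γ * (policyMatrix P π *ᵥ u) s - u s
  ring

theorem valueFn_eq_qValue (π : S → A) (s : S) :
    valueFn r P π γ s = qValue r P γ (valueFn r P π γ) s (π s) := by
  have := congrFun (one_sub_smul_mulVec_valueFn_sub r hP hγ0 hγ1 π (valueFn r P π γ)) s
  simp only [sub_self, mulVec_zero, Pi.zero_apply] at this
  linarith

theorem le_valueFn_of_le_qValue {π : S → A} {u : S → ℝ}
    (h : ∀ s, u s ≤ qValue r P γ u s (π s)) : u ≤ valueFn r P π γ :=
  sub_nonneg.1 <| nonneg_of_one_sub_smul_mulVec_nonneg (policyMatrix_mem_rowStochastic hP π)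
    hγ0 hγ1 <| by
      rw [one_sub_smul_mulVec_valueFn_sub r hP hγ0 hγ1]
      exact fun s => sub_nonneg.2 (h s)

theorem valueFn_le_of_qValue_le {π : S → A} {u : S → ℝ}
    (h : ∀ s, qValue r P γ u s (π s) ≤ u s) : valueFn r P π γ ≤ u :=
  sub_nonneg.1 <| nonneg_of_one_sub_smul_mulVec_nonneg (policyMatrix_mem_rowStochastic hP π)
    hγ0 hγ1 <| by
      rw [← neg_sub (valueFn r P π γ), mulVec_neg, one_sub_smul_mulVec_valueFn_sub r hP hγ0 hγ1]
      exact fun s => neg_nonneg.2 (sub_nonpos.2 (h s))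

theorem exists_forall_valueFn_le [Fintype A] [Nonempty A] :
    ∃ π : S → A, ∀ π', valueFn r P π' γ ≤ valueFn r P π γ := by
  -- a policy maximising `∑ s, v^π s` is not strictly improved by its greedy policy `σ`,
  -- so `v^π` satisfies the Bellman optimality inequalities
  obtain ⟨π, -, hπ⟩ := Finset.univ.exists_max_image (fun π : S → A => ∑ s, valueFn r P π γ s)
    Finset.univ_nonempty
  set v := valueFn r P π γ
  choose σ hσ using fun s => Finset.univ.exists_max_image (qValue r P γ v s) Finset.univ_nonempty
  have hvσ : v ≤ valueFn r P σ γ := le_valueFn_of_le_qValue r hP hγ0 hγ1 fun s =>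
    (valueFn_eq_qValue r hP hγ0 hγ1 π s).trans_le ((hσ s).2 _ (Finset.mem_univ _))
  have hσv : ∀ s, valueFn r P σ γ s = v s := fun s =>
    ((Finset.sum_eq_sum_iff_of_le fun s _ => hvσ s).1 ((Finset.sum_le_sum fun s _ => hvσ s).antisymm
      (hπ σ (Finset.mem_univ σ))) s (Finset.mem_univ s)).symm
  refine ⟨π, fun π' => valueFn_le_of_qValue_le r hP hγ0 hγ1 fun s => ?_⟩
  calc qValue r P γ v s (π' s) ≤ qValue r P γ v s (σ s) := (hσ s).2 _ (Finset.mem_univ _)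
    _ ≤ qValue r P γ (valueFn r P σ γ) s (σ s) := qValue_mono r hP hγ0 hvσ s (σ s)
    _ = valueFn r P σ γ s := (valueFn_eq_qValue r hP hγ0 hγ1 σ s).symm
    _ = v s := hσv s

end FixedDiscount

theorem exists_polynomial_nonneg_eval_iff_valueFn_le (π π' : S → A) (s : S) :
    ∃ q : ℝ[X], ∀ γ, 0 ≤ γ → γ < 1 →
      (0 ≤ q.eval γ ↔ valueFn r P π' γ s ≤ valueFn r P π γ s) := by
  set D := (policyMatrix P π).charpolyRev
  set D' := (policyMatrix P π').charpolyRev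
  obtain ⟨p, hp⟩ := (policyMatrix P π).exists_polynomial_eval_eq_charpolyRev_mul_inv_mulVec
    (policyReward r π)
  obtain ⟨p', hp'⟩ := (policyMatrix P π').exists_polynomial_eval_eq_charpolyRev_mul_inv_mulVec
    (policyReward r π')
  -- the extra factor `D * D'` turns the common denominator into a square
  refine ⟨(p s * D' - p' s * D) * D * D', fun γ hγ0 hγ1 => ?_⟩
  have hdet := det_one_sub_smul_ne_zero (policyMatrix_mem_rowStochastic hP π) hγ0 hγ1
  have hdet' := det_one_sub_smul_ne_zero (policyMatrix_mem_rowStochastic hP π') hγ0 hγ1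
  have heval : ((p s * D' - p' s * D) * D * D').eval γ =
      (valueFn r P π γ s - valueFn r P π' γ s) * (D.eval γ * D'.eval γ) ^ 2 := by
    simp only [eval_mul, eval_sub, hp γ hdet, hp' γ hdet', valueFn]
    ring
  have hD : 0 < (D.eval γ * D'.eval γ) ^ 2 := by
    rw [eval_charpolyRev_eq_det, eval_charpolyRev_eq_det]
    positivity
  rw [heval, mul_nonneg_iff_of_pos_right hD, sub_nonneg]

theorem eventually_valueFn_le_iff (π π' : S → A) (s : S) :
    ∀ᶠ γ in 𝓝[<] 1, valueFn r P π' γ s ≤ valueFn r P π γ s ↔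
      ∀ᶠ δ in 𝓝[<] 1, valueFn r P π' δ s ≤ valueFn r P π δ s := by
  obtain ⟨q, hq⟩ := exists_polynomial_nonneg_eval_iff_valueFn_le r hP π π' s
  have hIoo : ∀ᶠ γ in 𝓝[<] (1 : ℝ), γ ∈ Ioo 0 1 := Ioo_mem_nhdsLT zero_lt_one
  refine Filter.eventually_iff_eventually_of_or ?_
  refine (q.eventually_nonneg_or_eventually_neg_nhdsLT 1).imp (fun h => ?_) fun h => ?_
  · filter_upwards [h, hIoo] with γ hqγ hγ using (hq γ hγ.1.le hγ.2).1 hqγ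
  · filter_upwards [h, hIoo] with γ hqγ hγ using fun hle => hqγ.not_ge ((hq γ hγ.1.le hγ.2).2 hle)

end MDP

theorem exists_blackwell_optimal_policy_general {S A : Type*} [Fintype S] [DecidableEq S]
    [Fintype A] [Nonempty A]
    (r : S → A → ℝ) (P : S → A → S → ℝ)
    (hP0 : ∀ s a s', 0 ≤ P s a s') (hP1 : ∀ s a, ∑ s', P s a s' = 1) :
    ∃ (π : S → A) (γ₀ : ℝ), 0 ≤ γ₀ ∧ γ₀ < 1 ∧
      ∀ γ : ℝ, γ₀ ≤ γ → γ < 1 →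
        ∀ (π' : S → A) (s : S), valueFn r P π' γ s ≤ valueFn r P π γ s := by
  have hP : ∀ s a, P s a ∈ stdSimplex ℝ S := fun s a => ⟨hP0 s a, hP1 s a⟩
  have hstable : ∀ᶠ γ in 𝓝[<] 1, 0 ≤ γ ∧ ∀ π π' s,
      (valueFn r P π' γ s ≤ valueFn r P π γ s ↔
        ∀ᶠ δ in 𝓝[<] 1, valueFn r P π' δ s ≤ valueFn r P π δ s) :=
    (eventually_nhdsWithin_of_eventually_nhds (eventually_ge_nhds zero_lt_one)).and <|
      eventually_all.2 fun π => eventually_all.2 fun π' => eventually_all.2 fun s =>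
        eventually_valueFn_le_iff r hP π π' s
  obtain ⟨γ₀, hγ₀1, hsub⟩ := mem_nhdsLT_iff_exists_Ico_subset.1 hstable
  obtain ⟨hγ₀0, hγ₀stable⟩ := hsub ⟨le_rfl, hγ₀1⟩
  obtain ⟨π, hπ⟩ := exists_forall_valueFn_le r hP hγ₀0 hγ₀1
  refine ⟨π, γ₀, hγ₀0, hγ₀1, fun γ hγ₀γ hγ1 π' s => ?_⟩
  exact ((hsub ⟨hγ₀γ, hγ1⟩).2 π π' s).2 ((hγ₀stable π π' s).1 (hπ π' s))

/-- In any finite MDP there exists a Blackwell-optimal policy: a policy `π` and a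
`γ₀ ∈ [0,1)` such that `π` is `γ`-discounted optimal for every `γ ∈ [γ₀, 1)`. -/
theorem exists_blackwell_optimal_policy {S A : Type*} [Fintype S] [DecidableEq S]
    [Nonempty S] [Fintype A] [Nonempty A]
    (r : S → A → ℝ) (P : S → A → S → ℝ)
    (hP0 : ∀ s a s', 0 ≤ P s a s') (hP1 : ∀ s a, ∑ s', P s a s' = 1) :
    ∃ (π : S → A) (γ₀ : ℝ), 0 ≤ γ₀ ∧ γ₀ < 1 ∧
      ∀ γ : ℝ, γ₀ ≤ γ → γ < 1 →
        ∀ (π' : S → A) (s : S), valueFn r P π' γ s ≤ valueFn r P π γ s :=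
  exists_blackwell_optimal_policy_general r P hP0 hP1
end

section
/- Let the MDP (S, A, r, P) satisfy Assumption R with parameters m and r∞, and set N = 2|S| − 1, L = 2·|S|·r∞·m^{2|S|}·4^{|S|}, and η(M) = 1/(2·N^{N/2+2}·(L+1)^N). Then the Blackwell discount factor is strictly smaller than 1 − η(M): for every γ ∈ [1 − η(M), 1) and every policy π, π is γ-discounted optimal if and only if π is Blackwell-optimal. -/
open Matrix

/-- `π` is `γ`-discounted optimal. -/
def DiscountedOptimal {S A : Type*} [Fintype S] [DecidableEq S]
    (r : S → A → ℝ) (P : S → A → S → ℝ) (γ : ℝ) (π : S → A) : Prop :=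
  ∀ (π' : S → A) (s : S), valueFn r P π' γ s ≤ valueFn r P π γ s

/-- `π` is Blackwell-optimal: it is `γ'`-discounted optimal for all `γ'` in some `[γ₀, 1)`. -/
def BlackwellOptimal {S A : Type*} [Fintype S] [DecidableEq S]
    (r : S → A → ℝ) (P : S → A → S → ℝ) (π : S → A) : Prop :=
  ∃ γ₀ : ℝ, 0 ≤ γ₀ ∧ γ₀ < 1 ∧
    ∀ γ' : ℝ, γ₀ ≤ γ' → γ' < 1 → DiscountedOptimal r P γ' π

/-!
Write `P = K / m` and `r = q / m` with `K`, `q` integral. By Cramer's rule `v^π_γ(s)` is a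
quotient of two integer polynomials in `γ` whose denominator, `m ^ |S| * det (1 - γ • P_π)`, is
positive on `[0, 1)` (strict diagonal dominance, and continuity from `γ = 0`). Hence for policies
`π, π'` and a state `s`, `v^π_γ(s) - v^{π'}_γ(s)` has the sign of an integer polynomial `g` of
degree at most `N` whose coefficients have absolute sum at most `|S|!² L` (Leibniz expansion).
The coefficients of `g (1 + t)` have absolute sum at most `2 ^ N |S|!² L`, and the lowest nonzero
one is at least `1` in absolute value, so it dominates the other terms for `0 < |t| ≤ η`: `g` has
no root in `[1 - η, 1)`. Thus no comparison between two policies changes on that interval, so a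
policy optimal at one of its points is optimal at all of them, hence Blackwell-optimal, and a
Blackwell-optimal policy, being optimal near `1`, is optimal on all of it.
-/

open Polynomial Finset

theorem Finset.sum_ne_zero_of_sum_erase_abs_lt {ι G : Type*} [DecidableEq ι] [AddCommGroup G]
    [LinearOrder G] [IsOrderedAddMonoid G] {s : Finset ι} {f : ι → G} {k : ι} (hk : k ∈ s)
    (h : ∑ i ∈ s.erase k, |f i| < |f k|) : ∑ i ∈ s, f i ≠ 0 := by
  rw [← add_sum_erase s f hk, Ne, add_eq_zero_iff_eq_neg]
  intro hfk
  have := (abs_sum_le_sum_abs f (s.erase k)).trans_lt h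
  rw [hfk, abs_neg] at this
  exact this.false

theorem IsPreconnected.nonneg_of_nonneg {X α : Type*} [TopologicalSpace X] [LinearOrder α]
    [TopologicalSpace α] [OrderClosedTopology α] [Zero α] {s : Set X} (hs : IsPreconnected s)
    {f : X → α} (hf : ContinuousOn f s) (hf0 : ∀ x ∈ s, f x ≠ 0) {x y : X} (hx : x ∈ s)
    (hy : y ∈ s) (h : 0 ≤ f x) : 0 ≤ f y := by
  by_contra! hneg
  obtain ⟨z, hz, hfz⟩ := hs.intermediate_value hy hx hf ⟨hneg.le, h⟩
  exact hf0 z hz hfz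

namespace Polynomial

def l1Norm (p : ℤ[X]) : ℕ := ∑ i ∈ p.support, (p.coeff i).natAbs

theorem l1Norm_eq_sum_of_support_subset {p : ℤ[X]} {s : Finset ℕ} (h : p.support ⊆ s) :
    l1Norm p = ∑ i ∈ s, (p.coeff i).natAbs :=
  sum_subset h fun i _ hi => by simp [notMem_support_iff.mp hi]

theorem natAbs_coeff_le_l1Norm (p : ℤ[X]) (i : ℕ) : (p.coeff i).natAbs ≤ l1Norm p := by
  by_cases hi : i ∈ p.support
  · exact single_le_sum (f := fun i => (p.coeff i).natAbs) (fun _ _ => Nat.zero_le _) hi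
  · simp [notMem_support_iff.mp hi]

@[simp] theorem l1Norm_monomial (n : ℕ) (a : ℤ) : l1Norm (monomial n a) = a.natAbs := by
  rw [l1Norm_eq_sum_of_support_subset (support_monomial_subset n a), sum_singleton,
    coeff_monomial_same]

@[simp] theorem l1Norm_C (a : ℤ) : l1Norm (C a) = a.natAbs := by
  simpa using l1Norm_monomial 0 a

@[simp] theorem l1Norm_zero : l1Norm 0 = 0 := by simp [l1Norm]

@[simp] theorem l1Norm_one : l1Norm 1 = 1 := by simpa using l1Norm_C 1

@[simp] theorem l1Norm_X : l1Norm X = 1 := by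
  rw [← monomial_one_one_eq_X, l1Norm_monomial, Int.natAbs_one]

@[simp] theorem l1Norm_neg (p : ℤ[X]) : l1Norm (-p) = l1Norm p := by
  simp [l1Norm]

theorem l1Norm_add_le (p q : ℤ[X]) : l1Norm (p + q) ≤ l1Norm p + l1Norm q := by
  rw [l1Norm_eq_sum_of_support_subset support_add,
    l1Norm_eq_sum_of_support_subset (subset_union_left (s₂ := q.support)),
    l1Norm_eq_sum_of_support_subset (subset_union_right (s₁ := p.support)), ← sum_add_distrib]
  exact sum_le_sum fun i _ => by simpa using Int.natAbs_add_le (p.coeff i) (q.coeff i)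

theorem l1Norm_sub_le (p q : ℤ[X]) : l1Norm (p - q) ≤ l1Norm p + l1Norm q := by
  simpa [sub_eq_add_neg] using l1Norm_add_le p (-q)

theorem l1Norm_sum_le {ι : Type*} (s : Finset ι) (f : ι → ℤ[X]) :
    l1Norm (∑ i ∈ s, f i) ≤ ∑ i ∈ s, l1Norm (f i) :=
  le_sum_of_subadditive l1Norm l1Norm_zero.le l1Norm_add_le s f

theorem l1Norm_mul_le (p q : ℤ[X]) : l1Norm (p * q) ≤ l1Norm p * l1Norm q := by
  rw [mul_eq_sum_sum]
  refine (l1Norm_sum_le _ _).trans (le_of_le_of_eq (sum_le_sum fun i _ => ?_) (sum_mul ..).symm)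
  rw [Polynomial.sum_def]
  refine (l1Norm_sum_le _ _).trans (le_of_le_of_eq (sum_le_sum fun j _ => ?_) (mul_sum ..).symm)
  rw [l1Norm_monomial, Int.natAbs_mul]

theorem l1Norm_prod_le {ι : Type*} (s : Finset ι) (f : ι → ℤ[X]) :
    l1Norm (∏ i ∈ s, f i) ≤ ∏ i ∈ s, l1Norm (f i) :=
  le_prod_of_submultiplicative l1Norm l1Norm_one.le l1Norm_mul_le s f

theorem l1Norm_pow_le (p : ℤ[X]) (k : ℕ) : l1Norm (p ^ k) ≤ l1Norm p ^ k := by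
  simpa using l1Norm_prod_le (range k) fun _ => p

theorem l1Norm_taylor_one_le (p : ℤ[X]) : l1Norm (taylor 1 p) ≤ 2 ^ p.natDegree * l1Norm p := by
  have hX : l1Norm (X + C 1) ≤ 2 := by simpa using l1Norm_add_le X (C 1)
  conv_lhs => rw [p.as_sum_support, map_sum]
  refine (l1Norm_sum_le _ _).trans (le_of_le_of_eq (sum_le_sum fun i hi => ?_) (mul_sum ..).symm)
  rw [taylor_monomial, mul_comm (2 ^ _)]
  calc l1Norm (C (p.coeff i) * (X + C 1) ^ i) ≤ (p.coeff i).natAbs * 2 ^ i := by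
        refine (l1Norm_mul_le _ _).trans ?_
        rw [l1Norm_C]
        exact Nat.mul_le_mul_left _ ((l1Norm_pow_le _ i).trans (Nat.pow_le_pow_left hX i))
    _ ≤ (p.coeff i).natAbs * 2 ^ p.natDegree :=
        Nat.mul_le_mul_left _ (Nat.pow_le_pow_right two_pos (le_natDegree_of_mem_supp i hi))

/-- The lowest nonzero monomial of `p` dominates all the others. -/
theorem aeval_ne_zero_of_l1Norm_mul_abs_lt_one {p : ℤ[X]} (hp : p ≠ 0) {t : ℝ} (ht : t ≠ 0)
    (hlt : l1Norm p * |t| < 1) : aeval t p ≠ 0 := by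
  set k := p.natTrailingDegree
  have hk : p.coeff k ≠ 0 := mt trailingCoeff_eq_zero.mp hp
  have hck : (1 : ℝ) ≤ |(p.coeff k : ℝ)| := by exact_mod_cast Int.one_le_abs hk
  have ht0 : 0 < |t| := abs_pos.mpr ht
  have ht1 : |t| ≤ 1 := by
    have : (1 : ℝ) ≤ l1Norm p := by
      exact_mod_cast (Int.natAbs_pos.mpr hk).trans_le (natAbs_coeff_le_l1Norm p k)
    nlinarith
  rw [aeval_def, eval₂_eq_sum, Polynomial.sum_def]
  refine sum_ne_zero_of_sum_erase_abs_lt (mem_support_iff.mpr hk) ?_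
  calc ∑ i ∈ p.support.erase k, |algebraMap ℤ ℝ (p.coeff i) * t ^ i|
      ≤ ∑ i ∈ p.support.erase k, ((p.coeff i).natAbs : ℝ) * |t| ^ (k + 1) := by
        refine sum_le_sum fun i hi => ?_
        have hki : k < i := (natTrailingDegree_le_of_mem_supp i (mem_of_mem_erase hi)).lt_of_ne
          (ne_of_mem_erase hi).symm
        rw [abs_mul, abs_pow, algebraMap_int_eq, eq_intCast, Nat.cast_natAbs, Int.cast_abs]
        exact mul_le_mul_of_nonneg_left (pow_le_pow_of_le_one ht0.le ht1 hki) (abs_nonneg _)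
    _ ≤ l1Norm p * |t| ^ (k + 1) := by
        rw [← sum_mul]
        gcongr
        exact_mod_cast sum_le_sum_of_subset (erase_subset k p.support)
    _ = (l1Norm p * |t|) * |t| ^ k := by ring
    _ < 1 * |t| ^ k := by gcongr
    _ ≤ |algebraMap ℤ ℝ (p.coeff k) * t ^ k| := by
        rw [abs_mul, abs_pow, algebraMap_int_eq, eq_intCast]
        gcongr

theorem aeval_ne_zero_of_mem_Ico {p : ℤ[X]} (hp : p ≠ 0) {N : ℕ} (hdeg : p.natDegree ≤ N)
    {η : ℝ} (hη : η * (2 ^ N * l1Norm p) < 1) {γ : ℝ} (hγ : γ ∈ Set.Ico (1 - η) 1) :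
    aeval γ p ≠ 0 := by
  have hshift : aeval γ p = aeval (γ - 1) (taylor 1 p) := by
    simp [← eval_map_algebraMap, map_taylor, taylor_eval]
  rw [hshift]
  refine aeval_ne_zero_of_l1Norm_mul_abs_lt_one (by simpa using hp) (by linarith [hγ.2]) ?_
  have hbound : (l1Norm (taylor 1 p) : ℝ) ≤ 2 ^ N * l1Norm p := by
    exact_mod_cast (l1Norm_taylor_one_le p).trans
      (Nat.mul_le_mul_right _ (Nat.pow_le_pow_right two_pos hdeg))
  rw [abs_of_neg (by linarith [hγ.2])]
  calc (l1Norm (taylor 1 p) : ℝ) * -(γ - 1) ≤ 2 ^ N * l1Norm p * η := by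
        gcongr
        · linarith [hγ.2]
        · linarith [hγ.1]
    _ < 1 := by linarith

theorem aeval_nonneg_of_mem_Ico {p : ℤ[X]} {N : ℕ} (hdeg : p.natDegree ≤ N) {η : ℝ}
    (hη : η * (2 ^ N * p.l1Norm) < 1) {γ₁ γ₂ : ℝ} (h₁ : γ₁ ∈ Set.Ico (1 - η) 1)
    (h₂ : γ₂ ∈ Set.Ico (1 - η) 1) (h : 0 ≤ aeval γ₁ p) : 0 ≤ aeval γ₂ p := by
  rcases eq_or_ne p 0 with rfl | hp
  · simp
  exact isPreconnected_Ico.nonneg_of_nonneg (Polynomial.continuous_aeval p).continuousOn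
    (fun _ hγ => aeval_ne_zero_of_mem_Ico hp hdeg hη hγ) h₁ h₂ h

end Polynomial

namespace Matrix

variable {n : Type*} [Fintype n] [DecidableEq n]

theorem det_one_sub_smul_ne_zero_s15 {Q : Matrix n n ℝ} (hQ : Q ∈ rowStochastic ℝ n) {γ : ℝ}
    (hγ : γ ∈ Set.Ico 0 1) : (1 - γ • Q).det ≠ 0 := by
  refine det_ne_zero_of_sum_row_lt_diag fun k => ?_
  have hoff : ∑ j ∈ univ.erase k, ‖(1 - γ • Q) k j‖ = γ * (1 - Q k k) := by
    rw [← sum_row_of_mem_rowStochastic hQ k, ← sum_erase_eq_sub (mem_univ k), mul_sum]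
    refine sum_congr rfl fun j hj => ?_
    rw [sub_apply, one_apply_ne' (ne_of_mem_erase hj), smul_apply, smul_eq_mul, zero_sub,
      norm_neg, Real.norm_of_nonneg (mul_nonneg hγ.1 (nonneg_of_mem_rowStochastic hQ))]
  have hdiag : ‖(1 - γ • Q) k k‖ = 1 - γ * Q k k := by
    have : γ * Q k k ≤ γ := mul_le_of_le_one_right hγ.1 (le_one_of_mem_rowStochastic hQ)
    rw [sub_apply, one_apply_eq, smul_apply, smul_eq_mul, Real.norm_of_nonneg (by linarith [hγ.2])]
  rw [hoff, hdiag]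
  linarith [hγ.2]

theorem det_one_sub_smul_pos {Q : Matrix n n ℝ} (hQ : Q ∈ rowStochastic ℝ n) {γ : ℝ}
    (hγ : γ ∈ Set.Ico 0 1) : 0 < (1 - γ • Q).det := by
  have hcont : Continuous fun t : ℝ => (1 - t • Q).det := by fun_prop
  refine (isPreconnected_Ico.nonneg_of_nonneg hcont.continuousOn
    (fun t ht => det_one_sub_smul_ne_zero_s15 hQ ht) (Set.left_mem_Ico.2 one_pos) hγ
    (by simp)).lt_of_ne' (det_one_sub_smul_ne_zero_s15 hQ hγ)

theorem l1Norm_det_le (M : Matrix n n ℤ[X]) (c : n → ℕ) (h : ∀ i j, (M i j).l1Norm ≤ c j) :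
    M.det.l1Norm ≤ (Fintype.card n).factorial * ∏ j, c j := by
  rw [det_apply]
  calc (∑ σ : Equiv.Perm n, Equiv.Perm.sign σ • ∏ i, M (σ i) i).l1Norm
      ≤ ∑ σ : Equiv.Perm n, (Equiv.Perm.sign σ • ∏ i, M (σ i) i).l1Norm := l1Norm_sum_le _ _
    _ ≤ ∑ _σ : Equiv.Perm n, ∏ j, c j := sum_le_sum fun σ _ => ?_
    _ = (Fintype.card n).factorial * ∏ j, c j := by simp [Fintype.card_perm]
  rw [Units.smul_def, smul_eq_C_mul]
  refine (l1Norm_mul_le _ _).trans ?_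
  rw [l1Norm_C, Int.units_natAbs, one_mul]
  exact (l1Norm_prod_le _ _).trans (prod_le_prod' fun i _ => h _ _)

theorem natDegree_det_le {R : Type*} [CommRing R] (M : Matrix n n R[X]) (d : n → ℕ)
    (h : ∀ i j, (M i j).natDegree ≤ d j) : M.det.natDegree ≤ ∑ j, d j := by
  rw [det_apply]
  refine natDegree_sum_le_of_forall_le _ _ fun σ _ => (natDegree_smul_le _ _).trans ?_
  exact (natDegree_prod_le _ _).trans (sum_le_sum fun i _ => h _ _)

theorem l1Norm_cramer_le (M : Matrix n n ℤ[X]) (b : n → ℤ[X]) {c c' : ℕ}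
    (hM : ∀ i j, (M i j).l1Norm ≤ c) (hb : ∀ i, (b i).l1Norm ≤ c') (k : n) :
    (cramer M b k).l1Norm ≤ (Fintype.card n).factorial * (c' * c ^ (Fintype.card n - 1)) := by
  rw [cramer_apply]
  refine (l1Norm_det_le _ (Function.update (fun _ => c) k c') fun i j => ?_).trans_eq ?_
  · rw [updateCol_apply]
    split_ifs with hj
    · subst hj; simpa using hb i
    · simpa [hj] using hM i j
  · rw [prod_update_of_mem (mem_univ k), prod_const, card_univ_sdiff, card_singleton]

theorem natDegree_cramer_le {R : Type*} [CommRing R] (M : Matrix n n R[X]) (b : n → R[X])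
    {d d' : ℕ} (hM : ∀ i j, (M i j).natDegree ≤ d) (hb : ∀ i, (b i).natDegree ≤ d') (k : n) :
    (cramer M b k).natDegree ≤ d' + (Fintype.card n - 1) * d := by
  rw [cramer_apply]
  refine (natDegree_det_le _ (Function.update (fun _ => d) k d') fun i j => ?_).trans_eq ?_
  · rw [updateCol_apply]
    split_ifs with hj
    · subst hj; simpa using hb i
    · simpa [hj] using hM i j
  · rw [sum_update_of_mem (mem_univ k), sum_const, card_univ_sdiff, card_singleton, smul_eq_mul]

theorem map_cramer {R S F : Type*} [CommRing R] [CommRing S] [FunLike F R S] [RingHomClass F R S]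
    (f : F) (A : Matrix n n R) (b : n → R) (i : n) :
    f (cramer A b i) = cramer (A.map f) (f ∘ b) i := by
  rw [cramer_apply, cramer_apply, ← RingHom.coe_coe f, RingHom.map_det, RingHom.mapMatrix_apply,
    map_updateCol]

theorem inv_mulVec_apply_eq_cramer_div {K : Type*} [Field K] (A : Matrix n n K) (b : n → K)
    (i : n) : (A⁻¹ *ᵥ b) i = cramer A b i / A.det := by
  rw [inv_def, smul_mulVec, ← cramer_eq_adjugate_mulVec, Ring.inverse_eq_inv', Pi.smul_apply,
    smul_eq_mul, div_eq_inv_mul]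

theorem inv_smul_mulVec_smul {K : Type*} [Field K] (A : Matrix n n K) (b : n → K) {c : K}
    (hc : c ≠ 0) : (c • A)⁻¹ *ᵥ (c • b) = A⁻¹ *ᵥ b := by
  by_cases hA : IsUnit A.det
  · have := invertibleOfNonzero hc
    rw [inv_smul A c hA, smul_mulVec, mulVec_smul, smul_smul, invOf_eq_inv, inv_mul_cancel₀ hc,
      one_smul]
  · have hcA : ¬IsUnit (c • A).det := by
      simpa [det_smul, isUnit_iff_ne_zero, hc] using hA
    rw [nonsing_inv_apply_not_isUnit _ hA, nonsing_inv_apply_not_isUnit _ hcA, zero_mulVec,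
      zero_mulVec]

end Matrix

section DiscountMatrix

variable {n : Type*} [DecidableEq n]

/-- For `Q = K / m`, the matrix `m • (1 - X • Q)` with entries in `ℤ[X]`. -/
noncomputable def scaledDiscountMatrix (m : ℕ) (K : Matrix n n ℕ) : Matrix n n ℤ[X] :=
  of fun i j => C (if i = j then (m : ℤ) else 0) - C (K i j : ℤ) * X

theorem l1Norm_scaledDiscountMatrix_le {m : ℕ} {K : Matrix n n ℕ} (hK : ∀ i j, K i j ≤ m)
    (i j : n) : (scaledDiscountMatrix m K i j).l1Norm ≤ 2 * m := by
  refine (l1Norm_sub_le _ _).trans ?_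
  have h₁ : (C (if i = j then (m : ℤ) else 0)).l1Norm ≤ m := by
    rw [l1Norm_C]
    split_ifs <;> simp
  have h₂ : (C (K i j : ℤ) * X).l1Norm ≤ m := by
    refine (l1Norm_mul_le _ _).trans ?_
    simpa only [l1Norm_C, l1Norm_X, mul_one, Int.natAbs_natCast] using hK i j
  omega

theorem natDegree_scaledDiscountMatrix_le (m : ℕ) (K : Matrix n n ℕ) (i j : n) :
    (scaledDiscountMatrix m K i j).natDegree ≤ 1 := by
  refine (natDegree_sub_le _ _).trans (max_le ?_ ((natDegree_C_mul_le _ _).trans natDegree_X_le))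
  rw [natDegree_C]
  exact zero_le_one

theorem map_aeval_scaledDiscountMatrix {m : ℕ} (hm : m ≠ 0) {K : Matrix n n ℕ}
    {Q : Matrix n n ℝ} (hQ : ∀ i j, Q i j = K i j / m) (γ : ℝ) :
    (scaledDiscountMatrix m K).map (aeval γ) = (m : ℝ) • (1 - γ • Q) := by
  ext i j
  by_cases hij : i = j <;> simp [scaledDiscountMatrix, hQ, one_apply, hij] <;> field_simp

theorem inv_one_sub_smul_mulVec_eq_div [Fintype n] {m : ℕ} (hm : m ≠ 0) {K : Matrix n n ℕ}
    {q : n → ℤ} {Q : Matrix n n ℝ} {b : n → ℝ} (hQ : ∀ i j, Q i j = K i j / m)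
    (hb : ∀ i, b i = q i / m) (γ : ℝ) (i : n) :
    ((1 - γ • Q)⁻¹ *ᵥ b) i = aeval γ (cramer (scaledDiscountMatrix m K) (fun j => C (q j)) i) /
      aeval γ (scaledDiscountMatrix m K).det := by
  have hb' : aeval γ ∘ (fun j => C (q j)) = (m : ℝ) • b := by
    ext j
    simp [hb, mul_div_cancel₀, hm]
  rw [map_cramer (aeval (R := ℤ) γ), AlgHom.map_det, AlgHom.mapMatrix_apply, hb',
    map_aeval_scaledDiscountMatrix hm hQ, ← inv_mulVec_apply_eq_cramer_div,
    inv_smul_mulVec_smul _ _ (Nat.cast_ne_zero.2 hm)]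

end DiscountMatrix

section IntegralMDP

variable {S A : Type*} [Fintype S] [DecidableEq S]

noncomputable def valueDenominator (m : ℕ) (K : S → A → S → ℕ) (π : S → A) : ℤ[X] :=
  (scaledDiscountMatrix m (of fun s s' => K s (π s) s')).det

noncomputable def valueNumerator (m : ℕ) (K : S → A → S → ℕ) (q : S → A → ℤ) (π : S → A)
    (s : S) : ℤ[X] :=
  cramer (scaledDiscountMatrix m (of fun s s' => K s (π s) s')) (fun s => C (q s (π s))) s

noncomputable def valueGap (m : ℕ) (K : S → A → S → ℕ) (q : S → A → ℤ) (π π' : S → A) (s : S) :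
    ℤ[X] :=
  valueNumerator m K q π s * valueDenominator m K π' -
    valueNumerator m K q π' s * valueDenominator m K π

variable {r : S → A → ℝ} {P : S → A → S → ℝ} {m : ℕ} {K : S → A → S → ℕ} {q : S → A → ℤ}

theorem valueFn_eq_div (hm : m ≠ 0) (hPK : ∀ s a s', P s a s' = K s a s' / m)
    (hrq : ∀ s a, r s a = q s a / m) (π : S → A) (γ : ℝ) (s : S) :
    valueFn r P π γ s = aeval γ (valueNumerator m K q π s) / aeval γ (valueDenominator m K π) :=
  inv_one_sub_smul_mulVec_eq_div hm (fun s s' => hPK s (π s) s') (fun s => hrq s (π s)) γ s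

theorem aeval_valueDenominator_pos (hm : m ≠ 0) (hPK : ∀ s a s', P s a s' = K s a s' / m)
    (hP1 : ∀ s a, ∑ s', P s a s' = 1) (π : S → A) {γ : ℝ} (hγ : γ ∈ Set.Ico 0 1) :
    0 < aeval γ (valueDenominator m K π) := by
  have hstoch : policyMatrix P π ∈ rowStochastic ℝ S :=
    mem_rowStochastic_iff_sum.2 ⟨fun s s' => by rw [policyMatrix, of_apply, hPK]; positivity,
      fun s => hP1 s (π s)⟩
  rw [valueDenominator, AlgHom.map_det, AlgHom.mapMatrix_apply,
    map_aeval_scaledDiscountMatrix hm (K := of fun s s' => K s (π s) s') (Q := policyMatrix P π)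
      (fun s s' => hPK s (π s) s'),
    det_smul]
  exact mul_pos (pow_pos (Nat.cast_pos.2 (Nat.pos_of_ne_zero hm)) _)
    (det_one_sub_smul_pos hstoch hγ)

theorem valueFn_le_valueFn_iff (hm : m ≠ 0) (hPK : ∀ s a s', P s a s' = K s a s' / m)
    (hP1 : ∀ s a, ∑ s', P s a s' = 1) (hrq : ∀ s a, r s a = q s a / m) (π π' : S → A) (s : S)
    {γ : ℝ} (hγ : γ ∈ Set.Ico 0 1) :
    valueFn r P π' γ s ≤ valueFn r P π γ s ↔ 0 ≤ aeval γ (valueGap m K q π π' s) := by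
  rw [valueFn_eq_div hm hPK hrq, valueFn_eq_div hm hPK hrq,
    div_le_div_iff₀ (aeval_valueDenominator_pos hm hPK hP1 π' hγ)
      (aeval_valueDenominator_pos hm hPK hP1 π hγ),
    valueGap, map_sub, map_mul, map_mul, sub_nonneg]

theorem natDegree_valueGap_le (π π' : S → A) (s : S) :
    (valueGap m K q π π' s).natDegree ≤ 2 * Fintype.card S - 1 := by
  have hden : ∀ π : S → A, (valueDenominator m K π).natDegree ≤ Fintype.card S := fun π => by
    rw [valueDenominator]
    simpa using natDegree_det_le _ (fun _ => 1) (natDegree_scaledDiscountMatrix_le m _)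
  have hnum : ∀ π : S → A, (valueNumerator m K q π s).natDegree ≤ Fintype.card S - 1 :=
    fun π => by
      rw [valueNumerator]
      simpa using natDegree_cramer_le _ _ (natDegree_scaledDiscountMatrix_le m _)
        (fun s => (natDegree_C (q s (π s))).le) s
  refine (natDegree_sub_le _ _).trans (max_le ?_ ?_) <;>
    refine natDegree_mul_le.trans ?_ <;> grind

theorem l1Norm_valueGap_le {rinf : ℕ} (hm : 1 ≤ m) (hK : ∀ s a s', K s a s' ≤ m)
    (hq : ∀ s a, |q s a| ≤ (rinf : ℤ)) (π π' : S → A) (s : S) :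
    (valueGap m K q π π' s).l1Norm ≤ (Fintype.card S).factorial ^ 2 *
      (2 * Fintype.card S * rinf * m ^ (2 * Fintype.card S) * 4 ^ Fintype.card S) := by
  obtain ⟨p, hp⟩ : ∃ p, Fintype.card S = p + 1 :=
    Nat.exists_eq_add_one.2 (Fintype.card_pos_iff.2 ⟨s⟩)
  have hden : ∀ π : S → A,
      (valueDenominator m K π).l1Norm ≤ (p + 1).factorial * (2 * m) ^ (p + 1) := fun π => by
    rw [valueDenominator]
    simpa [hp] using l1Norm_det_le _ (fun _ => 2 * m)
      (l1Norm_scaledDiscountMatrix_le (K := of fun s s' => K s (π s) s') fun s s' => hK s (π s) s')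
  have hnum : ∀ π : S → A,
      (valueNumerator m K q π s).l1Norm ≤ (p + 1).factorial * (rinf * (2 * m) ^ p) := fun π => by
    rw [valueNumerator]
    refine (l1Norm_cramer_le _ _ (c := 2 * m) (c' := rinf)
      (l1Norm_scaledDiscountMatrix_le (K := of fun s s' => K s (π s) s') fun s s' => hK s (π s) s')
      (fun s => ?_) s).trans_eq (by rw [hp, Nat.add_sub_cancel])
    rw [l1Norm_C, ← Int.ofNat_le, Int.natCast_natAbs]
    exact hq s (π s)
  have h4 : (4 : ℕ) ^ (p + 1) = 2 ^ (2 * p + 2) := by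
    rw [show (4 : ℕ) = 2 ^ 2 by norm_num, ← pow_mul]
    ring_nf
  calc (valueGap m K q π π' s).l1Norm
      ≤ (valueNumerator m K q π s).l1Norm * (valueDenominator m K π').l1Norm +
          (valueNumerator m K q π' s).l1Norm * (valueDenominator m K π).l1Norm :=
        (l1Norm_sub_le _ _).trans (add_le_add (l1Norm_mul_le _ _) (l1Norm_mul_le _ _))
    _ ≤ (p + 1).factorial * (rinf * (2 * m) ^ p) * ((p + 1).factorial * (2 * m) ^ (p + 1)) +
          (p + 1).factorial * (rinf * (2 * m) ^ p) * ((p + 1).factorial * (2 * m) ^ (p + 1)) :=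
        add_le_add (Nat.mul_le_mul (hnum π) (hden π')) (Nat.mul_le_mul (hnum π') (hden π))
    _ = (p + 1).factorial ^ 2 * (1 * rinf * m ^ (2 * p + 1) * 2 ^ (2 * p + 2)) := by ring
    _ ≤ (p + 1).factorial ^ 2 * (2 * (p + 1) * rinf * m ^ (2 * (p + 1)) * 4 ^ (p + 1)) := by
        rw [h4]
        gcongr <;> omega
    _ = _ := by rw [hp]

end IntegralMDP

theorem sq_le_rpow_div_two_add_two {x y : ℝ} (hx : 1 ≤ x) (hy : 0 ≤ y) (hyx : y ≤ x) :
    y ^ 2 ≤ x ^ (x / 2 + 2) :=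
  calc y ^ 2 ≤ x ^ (2 : ℝ) := by rw [Real.rpow_two]; gcongr
    _ ≤ x ^ (x / 2 + 2) := Real.rpow_le_rpow_of_exponent_le hx (by linarith)

theorem eta_le_half {N : ℕ} (hN : 1 ≤ N) {L η : ℝ} (hL : 0 ≤ L)
    (hη : η = 1 / (2 * (N : ℝ) ^ ((N : ℝ) / 2 + 2) * (L + 1) ^ N)) : η ≤ 1 / 2 := by
  have hNx : 1 ≤ (N : ℝ) ^ ((N : ℝ) / 2 + 2) :=
    Real.one_le_rpow (by exact_mod_cast hN) (by positivity)
  have hLN : 1 ≤ (L + 1) ^ N := one_le_pow₀ (by linarith)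
  rw [hη]
  gcongr
  nlinarith

theorem eta_mul_lt_one {n m rinf N : ℕ} {L η : ℝ} (hN : N = 2 * n - 1)
    (hL : L = 2 * n * rinf * (m : ℝ) ^ (2 * n) * 4 ^ n)
    (hη : η = 1 / (2 * (N : ℝ) ^ ((N : ℝ) / 2 + 2) * (L + 1) ^ N)) :
    η * (2 ^ N * ((n.factorial ^ 2 : ℕ) * L)) < 1 := by
  by_cases hL0 : L = 0
  · simp [hL0]
  obtain ⟨p, rfl⟩ : ∃ p, n = p + 1 :=
    Nat.exists_eq_add_one.2 (Nat.pos_of_ne_zero (by rintro rfl; simp [hL] at hL0))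
  obtain rfl : N = 2 * p + 1 := by omega
  have hrinf : (1 : ℝ) ≤ rinf := by
    rcases Nat.eq_zero_or_pos rinf with h | h
    · simp [hL, h] at hL0
    · exact_mod_cast h
  have hm : (1 : ℝ) ≤ m := by
    rcases Nat.eq_zero_or_pos m with h | h
    · simp [hL, h] at hL0
    · exact_mod_cast h
  have h2n : 2 * ((p : ℝ) + 1) ≤ L := by
    rw [hL]
    have : 1 ≤ (rinf : ℝ) * (m : ℝ) ^ (2 * (p + 1)) * 4 ^ (p + 1) :=
      one_le_mul_of_one_le_of_one_le (one_le_mul_of_one_le_of_one_le hrinf (one_le_pow₀ hm))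
        (one_le_pow₀ (by norm_num))
    push_cast
    nlinarith
  have hNx₂ : ((p : ℝ) + 1) ^ 2 ≤ ((2 * p + 1 : ℕ) : ℝ) ^ (((2 * p + 1 : ℕ) : ℝ) / 2 + 2) :=
    sq_le_rpow_div_two_add_two (by norm_cast; omega) (by positivity) (by push_cast; linarith)
  have hfact : ((p + 1).factorial : ℝ) ≤ ((p : ℝ) + 1) ^ (p + 1) := by
    exact_mod_cast Nat.factorial_le_pow (p + 1)
  set Nx := ((2 * p + 1 : ℕ) : ℝ) ^ (((2 * p + 1 : ℕ) : ℝ) / 2 + 2)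
  have hNx : 0 < Nx := Real.rpow_pos_of_pos (by positivity) _
  have hpow : 0 < (L + 1) ^ (2 * p) := pow_pos (by linarith) _
  have hkey : (2 : ℝ) ^ (2 * p + 1) * (p + 1).factorial ^ 2 ≤ 2 * (L + 1) ^ (2 * p) * Nx :=
    calc (2 : ℝ) ^ (2 * p + 1) * (p + 1).factorial ^ 2
        ≤ 2 ^ (2 * p + 1) * (((p : ℝ) + 1) ^ (p + 1)) ^ 2 := by gcongr
      _ = 2 * (2 * ((p : ℝ) + 1)) ^ (2 * p) * ((p : ℝ) + 1) ^ 2 := by rw [mul_pow]; ring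
      _ ≤ 2 * (L + 1) ^ (2 * p) * Nx := by gcongr; linarith
  have hLpow : 0 < (L + 1) ^ (2 * p + 1) := pow_pos (by linarith) _
  rw [hη, one_div, inv_mul_lt_iff₀ (by positivity), mul_one]
  push_cast
  calc (2 : ℝ) ^ (2 * p + 1) * ((p + 1).factorial ^ 2 * L)
      ≤ 2 * (L + 1) ^ (2 * p) * Nx * L := by rw [← mul_assoc]; gcongr; linarith
    _ < 2 * (L + 1) ^ (2 * p) * Nx * (L + 1) := by gcongr; linarith
    _ = 2 * Nx * (L + 1) ^ (2 * p + 1) := by ring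

theorem blackwell_discount_factor_lt_one_sub_eta_general {S A : Type*} [Fintype S] [DecidableEq S]
    [Nonempty S]
    (r : S → A → ℝ) (P : S → A → S → ℝ) (m rinf : ℕ) (hm : 1 ≤ m)
    (hP : ∀ s a s', ∃ k : ℕ, k ≤ m ∧ P s a s' = (k : ℝ) / m)
    (hP1 : ∀ s a, ∑ s', P s a s' = 1)
    (hr : ∀ s a, ∃ q : ℤ, r s a = (q : ℝ) / m ∧ |q| ≤ (rinf : ℤ))
    (N : ℕ) (hNdef : N = 2 * Fintype.card S - 1)
    (L : ℝ)
    (hLdef : L = 2 * Fintype.card S * rinf *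
      (m : ℝ) ^ (2 * Fintype.card S) * 4 ^ Fintype.card S)
    (η : ℝ) (hηdef : η = 1 / (2 * (N : ℝ) ^ ((N : ℝ) / 2 + 2) * (L + 1) ^ N)) :
    ∀ γ : ℝ, 1 - η ≤ γ → γ < 1 →
      ∀ π : S → A, DiscountedOptimal r P γ π ↔ BlackwellOptimal r P π := by
  choose K hK hPK using hP
  choose q hrq hq using hr
  have hm₀ : m ≠ 0 := by omega
  have hη : η ≤ 1 / 2 :=
    eta_le_half (by have := Fintype.card_pos (α := S); omega) (by rw [hLdef]; positivity) hηdef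
  have stable : ∀ (π π' : S → A) (s : S) (γ₁ γ₂ : ℝ), γ₁ ∈ Set.Ico (1 - η) 1 →
      γ₂ ∈ Set.Ico (1 - η) 1 → valueFn r P π' γ₁ s ≤ valueFn r P π γ₁ s →
      valueFn r P π' γ₂ s ≤ valueFn r P π γ₂ s := by
    intro π π' s γ₁ γ₂ h₁ h₂
    have hgap : η * (2 ^ N * (valueGap m K q π π' s).l1Norm) < 1 := by
      refine lt_of_le_of_lt ?_ (eta_mul_lt_one hNdef hLdef hηdef)
      have := l1Norm_valueGap_le hm hK hq π π' s
      gcongr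
      · linarith [h₁.1, h₁.2]
      · rw [hLdef]; exact_mod_cast this
    rw [valueFn_le_valueFn_iff hm₀ hPK hP1 hrq π π' s ⟨by linarith [h₁.1], h₁.2⟩,
      valueFn_le_valueFn_iff hm₀ hPK hP1 hrq π π' s ⟨by linarith [h₂.1], h₂.2⟩]
    exact aeval_nonneg_of_mem_Ico (hNdef ▸ natDegree_valueGap_le π π' s) hgap h₁ h₂
  intro γ hγ hγ₁ π
  constructor
  · exact fun hopt => ⟨1 - η, by linarith, by linarith, fun γ' h h' π' s =>
      stable π π' s γ γ' ⟨hγ, hγ₁⟩ ⟨h, h'⟩ (hopt π' s)⟩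
  · rintro ⟨γ₀, -, hγ₀, hbw⟩ π' s
    have h₀ : max γ₀ (1 - η) ∈ Set.Ico (1 - η) 1 := ⟨le_max_right _ _, max_lt hγ₀ (by linarith)⟩
    exact stable π π' s _ γ h₀ ⟨hγ, hγ₁⟩ (hbw _ (le_max_left _ _) h₀.2 π' s)

/-- Under Assumption R, the Blackwell discount factor is strictly smaller than
`1 - η(M)`: for every `γ ∈ [1 - η(M), 1)`, a policy is `γ`-discounted optimal iff it is
Blackwell-optimal, where `N = 2|S| - 1`, `L = 2 |S| r∞ m^{2|S|} 4^{|S|}` and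
`η(M) = 1 / (2 N^{N/2+2} (L+1)^N)`. -/
theorem blackwell_discount_factor_lt_one_sub_eta {S A : Type*} [Fintype S] [DecidableEq S]
    [Nonempty S] [Fintype A] [Nonempty A]
    (r : S → A → ℝ) (P : S → A → S → ℝ) (m rinf : ℕ) (hm : 1 ≤ m)
    (hP : ∀ s a s', ∃ k : ℕ, k ≤ m ∧ P s a s' = (k : ℝ) / m)
    (hP0 : ∀ s a s', 0 ≤ P s a s') (hP1 : ∀ s a, ∑ s', P s a s' = 1)
    (hr : ∀ s a, ∃ q : ℤ, r s a = (q : ℝ) / m ∧ |q| ≤ (rinf : ℤ))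
    (N : ℕ) (hNdef : N = 2 * Fintype.card S - 1)
    (L : ℝ)
    (hLdef : L = 2 * Fintype.card S * rinf *
      (m : ℝ) ^ (2 * Fintype.card S) * 4 ^ Fintype.card S)
    (η : ℝ) (hηdef : η = 1 / (2 * (N : ℝ) ^ ((N : ℝ) / 2 + 2) * (L + 1) ^ N)) :
    ∀ γ : ℝ, 1 - η ≤ γ → γ < 1 →
      ∀ π : S → A, DiscountedOptimal r P γ π ↔ BlackwellOptimal r P π :=
  blackwell_discount_factor_lt_one_sub_eta_general r P m rinf hm hP hP1 hr N hNdef L hLdef η hηdef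
end
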